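/- Let a_{n,m} be the triangle numbers. For every natural number n one has a_{n,2} = n(n+1)(n−1)(n−2)/8; equivalently, 8·a_{n,2} = n(n+1)(n−1)(n−2) as integers. -/
import Mathlib

/-- The triangle numbers `a_{n,m}`: `a_{n,0} = 1`, `a_{0,m} = 0` for `m > 0`, and
`a_{n,m} = (n - 2(m-1)) a_{n-1,m-1} + a_{n-1,m}` for `n, m > 0`. -/
def triangleNum : ℕ → ℕ → ℤ
  | _, 0 => 1
  | 0, _ + 1 => 0
  | n + 1, m + 1 => ((n : ℤ) + 1 - 2 * m) * triangleNum n m + triangleNum n (m + 1)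

lemma triangleNum_one (n : ℕ) : 2 * triangleNum n 1 = n * (n + 1) := by
  induction n with
  | zero => simp [triangleNum]
  | succ k ih =>
    simp only [triangleNum] at *
    push_cast at *
    ring_nf at *
    linarith

/-- For every natural number `n`, `a_{n,2} = n(n+1)(n-1)(n-2)/8`, i.e.
`8 a_{n,2} = n(n+1)(n-1)(n-2)` as integers. -/
theorem triangleNum_two (n : ℕ) :
    8 * triangleNum n 2 = n * (n + 1) * ((n : ℤ) - 1) * ((n : ℤ) - 2) := by
  induction n with
  | zero => simp [triangleNum]
  | succ k ih =>
    have h1 := triangleNum_one k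
    simp only [triangleNum]
    push_cast
    linear_combination ih + 4*((k:ℤ)-1)*h1
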